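/- arXiv:1811.01406 — 4 statements merged into one kernel-verified Lean document; each statement's English description precedes it below -/
import Mathlib

section
/- Let $h:\mathbb{R}^d\to\mathbb{R}$ be continuous and bounded below, and suppose $\liminf_{M\to\infty}\inf_{\|x\|=M} h(x)/M > 0$. Then $\lim_{\varepsilon\to 0}\varepsilon\log\int_{\mathbb{R}^d} e^{-h(x)/\varepsilon}\,dx = -\inf_{x\in\mathbb{R}^d} h(x)$. -/
/-!
Writing `exp (-h x / ε) = exp (-((ε⁻¹ - 1) * h x)) * exp (-h x)` turns the integral into an
integral against the finite weight `exp (-h) dx`, integrable thanks to the linear growth of `h`.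
For `ε ≤ 1`, bounding `h` below by `m = inf h` on all of space, and above by `m' > m` on the
nonempty open set `{h < m'}`, squeezes `ε log ∫ exp (-h / ε)` between `-(1 - ε) m' + O(ε)` and
`-(1 - ε) m + O(ε)`.
-/

open Filter MeasureTheory Real Set Topology

lemma exp_neg_mul_norm_le {E : Type*} [SeminormedAddCommGroup E] {b : ℝ} (hb : 0 < b) (n : ℕ)
    (x : E) :
    exp (-(b * ‖x‖)) ≤ exp b * n.factorial / b ^ n * (1 + ‖x‖) ^ (-(n : ℝ)) := by
  have hpos : 0 < b * (1 + ‖x‖) := by positivity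
  have hfac := pow_div_factorial_le_exp _ hpos.le n
  rw [rpow_neg (by positivity), rpow_natCast]
  calc exp (-(b * ‖x‖)) = exp b / exp (b * (1 + ‖x‖)) := by
        rw [← exp_sub]; ring_nf
    _ ≤ exp b / ((b * (1 + ‖x‖)) ^ n / n.factorial) := by gcongr
    _ = exp b * n.factorial / b ^ n * ((1 + ‖x‖) ^ n)⁻¹ := by
        rw [mul_pow]; field_simp

lemma integrable_exp_neg_mul_norm {E : Type*} [NormedAddCommGroup E] [MeasurableSpace E]
    [OpensMeasurableSpace E] (μ : Measure E) [μ.HasTemperateGrowth] {b : ℝ} (hb : 0 < b) :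
    Integrable (fun x => exp (-(b * ‖x‖))) μ :=
  ((μ.integrable_pow_neg_integrablePower).const_mul _).mono'
    (by fun_prop)
    (Eventually.of_forall fun x => by
      rw [norm_of_nonneg (exp_pos _).le]
      exact exp_neg_mul_norm_le hb _ x)

lemma exists_mul_norm_sub_le_of_liminf_pos {E : Type*} [SeminormedAddCommGroup E] {h : E → ℝ}
    (hbdd : BddBelow (range h))
    (hgrowth : 0 < liminf (fun M : ℝ => ⨅ x : {x : E // ‖x‖ = M}, h x.1 / M) atTop) :
    ∃ c > 0, ∃ C, ∀ x, c * ‖x‖ - C ≤ h x := by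
  obtain ⟨m, hm⟩ := hbdd
  replace hm : ∀ x, m ≤ h x := fun x => hm ⟨x, rfl⟩
  have hdiv : ∀ x, ∀ M ≥ (1 : ℝ), min m 0 ≤ h x / M := fun x M hM => by
    rw [le_div_iff₀ (by linarith)]
    rcases le_total 0 m with h0 | h0
    · rw [min_eq_right h0]; nlinarith [hm x]
    · rw [min_eq_left h0]; nlinarith [hm x]
  have hbelow : ∀ᶠ M in atTop, min m 0 ≤ ⨅ x : {x : E // ‖x‖ = M}, h x.1 / M :=
    (eventually_ge_atTop 1).mono fun M hM =>
      Real.le_iInf (fun x => hdiv x.1 M hM) (min_le_right _ _)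
  set c := liminf (fun M : ℝ => ⨅ x : {x : E // ‖x‖ = M}, h x.1 / M) atTop / 2
  have hc : 0 < c := half_pos hgrowth
  have hlim := eventually_lt_of_lt_liminf (half_lt_self hgrowth)
    (isBoundedUnder_of_eventually_ge hbelow)
  obtain ⟨R, hR⟩ := (hlim.and (eventually_ge_atTop 1)).exists_forall_of_atTop
  have hfar : ∀ x, R ≤ ‖x‖ → c * ‖x‖ ≤ h x := fun x hx => by
    obtain ⟨hlt, h1⟩ := hR ‖x‖ hx
    have hle := ciInf_le ⟨min m 0, forall_mem_range.2 fun y => hdiv y.1 _ h1⟩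
      (⟨x, rfl⟩ : {y : E // ‖y‖ = ‖x‖})
    have := hlt.trans_le hle
    rw [lt_div_iff₀ (by linarith)] at this
    exact this.le
  refine ⟨c, hc, |c * R - m|, fun x => ?_⟩
  rcases le_or_gt R ‖x‖ with hx | hx
  · linarith [hfar x hx, abs_nonneg (c * R - m)]
  · linarith [hm x, le_abs_self (c * R - m), mul_le_mul_of_nonneg_left hx.le hc.le]

lemma integrable_exp_neg_of_mul_norm_sub_le {E : Type*} [NormedAddCommGroup E]
    [MeasurableSpace E] [OpensMeasurableSpace E] (μ : Measure E) [μ.HasTemperateGrowth]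
    {h : E → ℝ} (hcont : Continuous h) {c C : ℝ} (hc : 0 < c) (hh : ∀ x, c * ‖x‖ - C ≤ h x) :
    Integrable (fun x => exp (-h x)) μ :=
  ((integrable_exp_neg_mul_norm μ hc).const_mul (exp C)).mono' (by fun_prop)
    (Eventually.of_forall fun x => by
      rw [norm_of_nonneg (exp_pos _).le, ← exp_add]
      exact exp_le_exp.2 (by linarith [hh x]))

lemma exp_neg_div_eq {ε : ℝ} (hε : ε ≠ 0) (y : ℝ) :
    exp (-y / ε) = exp (-((ε⁻¹ - 1) * y)) * exp (-y) := by
  rw [← exp_add]; congr 1; field_simp; ring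

lemma exp_neg_div_le {m y ε : ℝ} (hy : m ≤ y) (hε : ε ∈ Ioc 0 1) :
    exp (-y / ε) ≤ exp (-((ε⁻¹ - 1) * m)) * exp (-y) := by
  have : 0 ≤ ε⁻¹ - 1 := sub_nonneg.2 ((one_le_inv₀ hε.1).2 hε.2)
  rw [exp_neg_div_eq hε.1.ne']
  gcongr

lemma le_exp_neg_div {m y ε : ℝ} (hy : y ≤ m) (hε : ε ∈ Ioc 0 1) :
    exp (-((ε⁻¹ - 1) * m)) * exp (-y) ≤ exp (-y / ε) := by
  have : 0 ≤ ε⁻¹ - 1 := sub_nonneg.2 ((one_le_inv₀ hε.1).2 hε.2)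
  rw [exp_neg_div_eq hε.1.ne']
  gcongr

lemma tendsto_mul_log_exp_mul (a : ℝ) {C : ℝ} (hC : 0 < C) :
    Tendsto (fun ε => ε * log (exp (-((ε⁻¹ - 1) * a)) * C)) (𝓝[>] 0) (𝓝 (-a)) := by
  have hlin : Tendsto (fun ε : ℝ => -(1 - ε) * a + ε * log C) (𝓝[>] 0) (𝓝 (-a)) := by
    have : Continuous fun ε : ℝ => -(1 - ε) * a + ε * log C := by fun_prop
    simpa using (this.tendsto 0).mono_left nhdsWithin_le_nhds
  refine hlin.congr' (eventually_mem_nhdsWithin.mono fun ε (hε : 0 < ε) => ?_)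
  dsimp only
  rw [log_mul (exp_pos _).ne' hC.ne', log_exp]
  field_simp

section Laplace

variable {X : Type*} [TopologicalSpace X] [MeasurableSpace X] [OpensMeasurableSpace X]
  {μ : Measure X} {h : X → ℝ} {m ε : ℝ}

lemma integrable_exp_neg_div (hcont : Continuous h) (hm : ∀ x, m ≤ h x)
    (hint : Integrable (fun x => exp (-h x)) μ) (hε : ε ∈ Ioc 0 1) :
    Integrable (fun x => exp (-h x / ε)) μ :=
  (hint.const_mul _).mono' (by fun_prop)
    (Eventually.of_forall fun x => by
      rw [norm_of_nonneg (exp_pos _).le]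
      exact exp_neg_div_le (hm x) hε)

lemma integral_exp_neg_div_le (hcont : Continuous h) (hm : ∀ x, m ≤ h x)
    (hint : Integrable (fun x => exp (-h x)) μ) (hε : ε ∈ Ioc 0 1) :
    ∫ x, exp (-h x / ε) ∂μ ≤ exp (-((ε⁻¹ - 1) * m)) * ∫ x, exp (-h x) ∂μ := by
  rw [← integral_const_mul]
  exact integral_mono (integrable_exp_neg_div hcont hm hint hε) (hint.const_mul _)
    fun x => exp_neg_div_le (hm x) hε

lemma le_integral_exp_neg_div (hcont : Continuous h) (hm : ∀ x, m ≤ h x)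
    (hint : Integrable (fun x => exp (-h x)) μ) (hε : ε ∈ Ioc 0 1) (m' : ℝ) :
    exp (-((ε⁻¹ - 1) * m')) * ∫ x in {x | h x < m'}, exp (-h x) ∂μ ≤
      ∫ x, exp (-h x / ε) ∂μ := by
  have hU : MeasurableSet {x | h x < m'} := (isOpen_lt hcont continuous_const).measurableSet
  have hint' := integrable_exp_neg_div hcont hm hint hε
  rw [← integral_const_mul]
  calc ∫ x in {x | h x < m'}, exp (-((ε⁻¹ - 1) * m')) * exp (-h x) ∂μ
      ≤ ∫ x in {x | h x < m'}, exp (-h x / ε) ∂μ :=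
        setIntegral_mono_on (hint.const_mul _).integrableOn hint'.integrableOn hU
          fun x (hx : h x < m') => le_exp_neg_div hx.le hε
    _ ≤ ∫ x, exp (-h x / ε) ∂μ :=
        setIntegral_le_integral hint' (Eventually.of_forall fun _ => (exp_pos _).le)

theorem tendsto_mul_log_integral_exp_neg_div [Nonempty X] [μ.IsOpenPosMeasure]
    (hcont : Continuous h) (hbdd : BddBelow (range h))
    (hint : Integrable (fun x => exp (-h x)) μ) :
    Tendsto (fun ε => ε * log (∫ x, exp (-h x / ε) ∂μ)) (𝓝[>] 0) (𝓝 (-⨅ x, h x)) := by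
  have hm : ∀ x, ⨅ x, h x ≤ h x := ciInf_le hbdd
  have hε01 : ∀ᶠ ε in 𝓝[>] (0 : ℝ), ε ∈ Ioc 0 1 := Ioc_mem_nhdsGT one_pos
  refine tendsto_order.2 ⟨fun a ha => ?_, fun b hb => ?_⟩
  · obtain ⟨a', ha, ha'⟩ := exists_between ha
    obtain ⟨x₀, hx₀⟩ := exists_lt_of_ciInf_lt (lt_neg_of_lt_neg ha')
    have hL : 0 < ∫ x in {x | h x < -a'}, exp (-h x) ∂μ := by
      have : μ {x | h x < -a'} ≠ 0 :=
        ((isOpen_lt hcont continuous_const).measure_pos μ ⟨x₀, hx₀⟩).ne'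
      have : NeZero (μ.restrict {x | h x < -a'}) := ⟨by simpa using this⟩
      exact integral_exp_pos hint.integrableOn
    filter_upwards [hε01, ((tendsto_mul_log_exp_mul (-a') hL).eventually
      (eventually_gt_nhds (by rwa [neg_neg])))] with ε hε hlow
    refine hlow.trans_le (mul_le_mul_of_nonneg_left (log_le_log (mul_pos (exp_pos _) hL) ?_)
      hε.1.le)
    exact le_integral_exp_neg_div hcont hm hint hε _
  · filter_upwards [hε01, ((tendsto_mul_log_exp_mul _ (integral_exp_pos hint)).eventually
      (eventually_lt_nhds hb))] with ε hε hup
    refine lt_of_le_of_lt (mul_le_mul_of_nonneg_left (log_le_log ?_ ?_) hε.1.le) hup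
    · exact integral_exp_pos (integrable_exp_neg_div hcont hm hint hε)
    · exact integral_exp_neg_div_le hcont hm hint hε

end Laplace

/-- Laplace asymptotics for `∫ exp (-h x / ε)` on `ℝ^d`: if `h` is continuous, bounded below
and has superlinear growth (in the liminf sense over spheres), then
`ε log ∫ exp (-h x / ε) dx → -inf h` as `ε → 0⁺`. -/
theorem stmt_0 {d : ℕ} (h : EuclideanSpace ℝ (Fin d) → ℝ)
    (hcont : Continuous h) (hbdd : BddBelow (Set.range h))
    (hgrowth : 0 < Filter.liminf
      (fun M : ℝ => ⨅ x : {x : EuclideanSpace ℝ (Fin d) // ‖x‖ = M}, h x.1 / M) atTop) :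
    Tendsto (fun ε : ℝ => ε * Real.log (∫ x, Real.exp (-h x / ε)))
      (nhdsWithin 0 (Set.Ioi 0)) (nhds (-(⨅ x, h x))) := by
  obtain ⟨c, hc, C, hh⟩ := exists_mul_norm_sub_le_of_liminf_pos hbdd hgrowth
  exact tendsto_mul_log_integral_exp_neg_div hcont hbdd
    (integrable_exp_neg_of_mul_norm_sub_le volume hcont hc hh)
end

section
/- Fix $K\ge 1$ and a continuous rate function $I:\mathcal{X}\to[0,\infty)$ on a metric space $\mathcal{X}$ together with a continuous $F:\mathcal{X}\to\mathbb{R}$ bounded below. For $\boldsymbol{\alpha}$ with $1=\alpha_1\ge\cdots\ge\alpha_K\ge 0$ define $G(\boldsymbol{\alpha}) \doteq \inf_{(I_1,\dots,I_K): (I_1,F_1)\in D,\ 0\le I_j\le I_1\ (j\ge 2)}\big[2\sum_{j=1}^K \alpha_j I_j + 2F_1 - \min_{\sigma\in\Sigma_K}\sum_{j=1}^K \alpha_j I_{\sigma(j)}\big]$ where $D = \{(I(x),F(x)):x\in\mathcal{X}\}$. Then $\sup_{\boldsymbol{\alpha}} G(\boldsymbol{\alpha}) = \inf_{x\in\mathcal{X}}\{(2-(1/2)^{K-1})I(x)+2F(x)\}$,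 and the supremum is attained at $\boldsymbol{\alpha}^* = (1,1/2,1/4,\dots,(1/2)^{K-1})$. -/
/-!
At `α* = (1, 1/2, …, (1/2)^(K-1))` the cyclic shift `j ↦ j + 1` is one of the permutations, and
for it `2 ∑ α*_j I_j - ∑ α*_j I_{j+1} = (2 - (1/2)^(K-1)) I₁` telescopes exactly, so
`G(α*)` is at least the right-hand side.

Conversely, for any admissible `α` a doubling argument gives an index `k` with
`∑_{i>k} α_i + (1/2)^(K-1) ≤ α_k`. Take `I_j = I(x)` on `S = {1} ∪ {j > k}` and `I_j = 0`
otherwise. A permutation pairs `I(x)` with `|S| = |{j ≥ k}|` of the weights, and for antitone `α`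
the tail `{j ≥ k}` is the cheapest such choice; hence `G(α) ≤ (2 - (1/2)^(K-1)) I(x) + 2 F(x)`
for every `x`.
-/

open Finset

theorem Antitone.sum_Ici_le_sum_of_card_eq {ι M : Type*} [LinearOrder ι] [LocallyFiniteOrderTop ι]
    [AddCommMonoid M] [PartialOrder M] [IsOrderedAddMonoid M] {α : ι → M} (hα : Antitone α)
    {j : ι} {P : Finset ι} (hP : #P = #(Ici j)) :
    ∑ i ∈ Ici j, α i ≤ ∑ i ∈ P, α i := by
  classical
  have hout : ∑ i ∈ Ici j \ P, α i ≤ ∑ i ∈ P \ Ici j, α i :=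
    calc ∑ i ∈ Ici j \ P, α i ≤ #(Ici j \ P) • α j :=
          sum_le_card_nsmul _ _ _ fun i hi => hα (mem_Ici.mp (mem_sdiff.mp hi).1)
      _ = #(P \ Ici j) • α j := by rw [card_sdiff_comm hP.symm]
      _ ≤ ∑ i ∈ P \ Ici j, α i := card_nsmul_le_sum _ _ _ fun i hi =>
          hα (not_le.mp (mem_Ici.not.mp (mem_sdiff.mp hi).2)).le
  calc ∑ i ∈ Ici j, α i = ∑ i ∈ Ici j ∩ P, α i + ∑ i ∈ Ici j \ P, α i :=
        (sum_inter_add_sum_sdiff ..).symm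
    _ ≤ ∑ i ∈ P ∩ Ici j, α i + ∑ i ∈ P \ Ici j, α i := by rw [inter_comm]; gcongr
    _ = ∑ i ∈ P, α i := sum_inter_add_sum_sdiff ..

theorem Antitone.sum_Ici_mul_le_sum_mul_ite_perm {ι : Type*} [Fintype ι] [LinearOrder ι]
    [LocallyFiniteOrderTop ι] {α : ι → ℝ} (hα : Antitone α) {j : ι} {S : Finset ι}
    (hS : #S = #(Ici j)) {c : ℝ} (hc : 0 ≤ c) (σ : Equiv.Perm ι) :
    (∑ i ∈ Ici j, α i) * c ≤ ∑ i, α i * if σ i ∈ S then c else 0 := by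
  have hsum : ∑ i, α i * (if σ i ∈ S then c else 0)
      = (∑ i ∈ S.map σ.symm.toEmbedding, α i) * c := by
    rw [← σ.symm.sum_comp, sum_map, sum_mul]
    simp [mul_ite, sum_ite_mem]
  rw [hsum]
  exact mul_le_mul_of_nonneg_right (hα.sum_Ici_le_sum_of_card_eq (by rw [card_map, hS])) hc

theorem Fin.exists_sum_Ioi_add_le {n : ℕ} (α : Fin (n + 1) → ℝ) :
    ∃ j, ∑ i ∈ Ioi j, α i + (1 / 2) ^ n * α 0 ≤ α j := by
  by_contra! h
  set ε := (1 / 2 : ℝ) ^ n * α 0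
  have tail : ∀ j : Fin (n + 1), ∑ i ∈ Ioi j, α i + ε ≤ 2 ^ (n - j : ℕ) * ε := by
    refine Fin.reverseInduction (by simp [← Fin.top_eq_last]) fun i ih => ?_
    have hIoi : Ioi i.castSucc = insert i.succ (Ioi i.succ) := by
      ext k
      simp only [mem_Ioi, mem_insert, Fin.lt_def, Fin.ext_iff, Fin.val_succ, Fin.val_castSucc]
      omega
    have hexp : n - (i.castSucc : ℕ) = n - (i.succ : ℕ) + 1 := by
      simp only [Fin.val_castSucc, Fin.val_succ]; omega
    rw [hIoi, sum_insert (by simp), hexp, pow_succ]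
    linarith [h i.succ]
  have h2n : (2 : ℝ) ^ n * ε = α 0 := by
    rw [← mul_assoc, ← mul_pow]; norm_num
  have htail0 := tail 0
  simp only [Fin.val_zero, Nat.sub_zero] at htail0
  linarith [h 0]

theorem two_mul_sum_sub_sum_finRotate {n : ℕ} (v : Fin (n + 1) → ℝ) :
    2 * ∑ j : Fin (n + 1), (1 / 2 : ℝ) ^ (j : ℕ) * v j
      - ∑ j : Fin (n + 1), (1 / 2 : ℝ) ^ (j : ℕ) * v (finRotate _ j) = (2 - (1 / 2) ^ n) * v 0 := by
  have hshift : 2 * ∑ j : Fin n, (1 / 2 : ℝ) ^ ((j : ℕ) + 1) * v j.succ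
      = ∑ j : Fin n, (1 / 2 : ℝ) ^ (j : ℕ) * v j.succ := by
    rw [mul_sum]; congr! 1 with j; ring
  rw [Fin.sum_univ_succ, Fin.sum_univ_castSucc (fun j => _ * v (finRotate _ j))]
  simp only [finRotate_apply, Fin.last_add_one, Fin.coeSucc_eq_succ, Fin.val_succ, Fin.val_castSucc,
    Fin.val_zero, Fin.val_last, pow_zero]
  linarith

theorem le_two_mul_sum_sub_iInf_perm_half {n : ℕ} (v : Fin (n + 1) → ℝ) :
    (2 - (1 / 2) ^ n) * v 0 ≤ 2 * ∑ j : Fin (n + 1), (1 / 2 : ℝ) ^ (j : ℕ) * v j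
      - ⨅ σ : Equiv.Perm (Fin (n + 1)), ∑ j : Fin (n + 1), (1 / 2 : ℝ) ^ (j : ℕ) * v (σ j) := by
  rw [← two_mul_sum_sub_sum_finRotate]
  gcongr
  exact ciInf_le (Set.finite_range _).bddBelow (finRotate _)

theorem exists_two_mul_sum_sub_iInf_perm_le {n : ℕ} {α : Fin (n + 1) → ℝ} (hα : Antitone α)
    {c : ℝ} (hc : 0 ≤ c) :
    ∃ v : Fin (n + 1) → ℝ, v 0 = c ∧ (∀ j, 0 ≤ v j ∧ v j ≤ v 0) ∧
      2 * ∑ j, α j * v j - ⨅ σ : Equiv.Perm (Fin (n + 1)), ∑ j, α j * v (σ j)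
        ≤ (2 - (1 / 2) ^ n) * α 0 * c := by
  obtain ⟨k, hk⟩ := Fin.exists_sum_Ioi_add_le α
  set S := insert 0 (Ioi k)
  have h0S : (0 : Fin (n + 1)) ∉ Ioi k := by simp
  have hS : #S = #(Ici k) := by
    rw [← Ioi_insert, card_insert_of_notMem h0S, card_insert_of_notMem (by simp)]
  refine ⟨fun i => if i ∈ S then c else 0, by simp [S], fun j => ?_, ?_⟩
  · simp only [S, mem_insert_self, if_true]
    split_ifs <;> simp [hc]
  have hsum : ∑ j, α j * (if j ∈ S then c else 0) = (α 0 + ∑ i ∈ Ioi k, α i) * c := by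
    simp only [mul_ite, mul_zero, sum_ite_mem, univ_inter, S, sum_insert h0S]
    rw [add_mul, sum_mul]
  have hmin : (α k + ∑ i ∈ Ioi k, α i) * c
      ≤ ⨅ σ : Equiv.Perm (Fin (n + 1)), ∑ j, α j * (if σ j ∈ S then c else 0) := by
    rw [← sum_insert (f := α) (by simp : k ∉ Ioi k), Ioi_insert]
    exact le_ciInf (hα.sum_Ici_mul_le_sum_mul_ite_perm hS hc)
  rw [hsum]
  linarith [mul_le_mul_of_nonneg_right hk hc]

/-- The paper's `G(α)`; `Iv` is the vector `(I₁, …, I_K)`, indexed from `0`. -/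
noncomputable def insRate {X : Type*} {K : ℕ} [NeZero K] (I F : X → ℝ) (α : Fin K → ℝ) : ℝ :=
  sInf {v : ℝ | ∃ (x : X) (Iv : Fin K → ℝ), Iv 0 = I x ∧
    (∀ j, 0 ≤ Iv j ∧ Iv j ≤ Iv 0) ∧
    v = 2 * ∑ j, α j * Iv j + 2 * F x - ⨅ σ : Equiv.Perm (Fin K), ∑ j, α j * Iv (σ j)}

section insRate

variable {X : Type*} {n : ℕ} {I F : X → ℝ}

theorem insRate_le {α : Fin (n + 1) → ℝ} (hα0 : α 0 = 1) (hα : Antitone α)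
    (hα_nonneg : ∀ j, 0 ≤ α j) (hI : ∀ x, 0 ≤ I x) (hF : BddBelow (Set.range F)) (x : X) :
    insRate I F α ≤ (2 - (1 / 2) ^ n) * I x + 2 * F x := by
  obtain ⟨b, hb⟩ := hF
  obtain ⟨v, hv0, hv, hgap⟩ := exists_two_mul_sum_sub_iInf_perm_le hα (hI x)
  refine csInf_le_of_le ⟨2 * b, ?_⟩ ⟨x, v, hv0, hv, rfl⟩ (by rw [hα0, mul_one] at hgap; linarith)
  rintro _ ⟨y, w, -, hw, rfl⟩
  have hmin : (⨅ σ : Equiv.Perm (Fin (n + 1)), ∑ j, α j * w (σ j)) ≤ ∑ j, α j * w j :=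
    ciInf_le_of_le (Set.finite_range _).bddBelow 1 le_rfl
  have hsum : 0 ≤ ∑ j, α j * w j := sum_nonneg fun j _ => mul_nonneg (hα_nonneg j) (hw j).1
  linarith [hb ⟨y, rfl⟩]

theorem le_insRate_half [Nonempty X] (hI : ∀ x, 0 ≤ I x) {m : ℝ}
    (hm : ∀ x, m ≤ (2 - (1 / 2) ^ n) * I x + 2 * F x) :
    m ≤ insRate I F fun j : Fin (n + 1) => (1 / 2 : ℝ) ^ (j : ℕ) := by
  refine le_csInf ?_ ?_
  · obtain ⟨x⟩ := ‹Nonempty X›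
    exact ⟨_, x, fun _ => I x, rfl, fun _ => ⟨hI x, le_rfl⟩, rfl⟩
  rintro _ ⟨x, v, hv0, -, rfl⟩
  linarith [hm x, hv0 ▸ le_two_mul_sum_sub_iInf_perm_half v]

end insRate

theorem stmt_8_general {X : Type*} [Nonempty X] (K : ℕ) [NeZero K]
    (I : X → ℝ) (hInonneg : ∀ x, 0 ≤ I x)
    (F : X → ℝ) (hFbdd : BddBelow (Set.range F))
    (G : (Fin K → ℝ) → ℝ)
    (hG : ∀ α, G α = sInf {v : ℝ | ∃ (x : X) (Iv : Fin K → ℝ), Iv 0 = I x ∧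
        (∀ j, 0 ≤ Iv j ∧ Iv j ≤ Iv 0) ∧
        v = 2 * ∑ j, α j * Iv j + 2 * F x
          - ⨅ σ : Equiv.Perm (Fin K), ∑ j, α j * Iv (σ j)}) :
    IsGreatest (G '' {α : Fin K → ℝ | α 0 = 1 ∧ Antitone α ∧ ∀ j, 0 ≤ α j})
        (⨅ x : X, ((2 - (1/2 : ℝ) ^ (K - 1)) * I x + 2 * F x)) ∧
      G (fun j => (1/2 : ℝ) ^ (j : ℕ))
        = ⨅ x : X, ((2 - (1/2 : ℝ) ^ (K - 1)) * I x + 2 * F x) := by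
  obtain rfl : G = insRate I F := funext hG
  obtain ⟨n, rfl⟩ : ∃ n, K = n + 1 := ⟨K - 1, (Nat.sub_add_cancel NeZero.one_le).symm⟩
  rw [Nat.add_sub_cancel]
  have hbdd : BddBelow (Set.range fun x => (2 - (1 / 2 : ℝ) ^ n) * I x + 2 * F x) := by
    obtain ⟨b, hb⟩ := hFbdd
    refine ⟨2 * b, Set.forall_mem_range.mpr fun x => ?_⟩
    have hε : (1 / 2 : ℝ) ^ n ≤ 2 := (pow_le_one₀ (by norm_num) (by norm_num)).trans one_le_two
    linarith [hb ⟨x, rfl⟩, mul_nonneg (sub_nonneg.mpr hε) (hInonneg x)]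
  have hadm : ∀ {α : Fin (n + 1) → ℝ}, α 0 = 1 → Antitone α → (∀ j, 0 ≤ α j) →
      insRate I F α ≤ ⨅ x, (2 - (1 / 2 : ℝ) ^ n) * I x + 2 * F x :=
    fun hα0 hα hα_nonneg => le_ciInf (insRate_le hα0 hα hα_nonneg hInonneg hFbdd)
  have hhalf_anti : Antitone fun j : Fin (n + 1) => (1 / 2 : ℝ) ^ (j : ℕ) :=
    fun i j hij => pow_le_pow_of_le_one (by norm_num) (by norm_num) hij
  have hstar := le_antisymm (hadm (by simp) hhalf_anti fun j => by positivity)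
    (le_insRate_half hInonneg (ciInf_le hbdd))
  refine ⟨⟨⟨_, ⟨by simp, hhalf_anti, fun j => by positivity⟩, hstar⟩, ?_⟩, hstar⟩
  rintro _ ⟨α, ⟨hα0, hα, hα_nonneg⟩, rfl⟩
  exact hadm hα0 hα hα_nonneg

/-- Optimization part of Lemma 2: with
`G(α) = inf { 2∑ α_j I_j + 2F(x) - min_σ ∑ α_j I_{σ(j)} : I₁ = I(x), 0 ≤ I_j ≤ I₁ }`,
the supremum of `G` over admissible temperature vectors `1 = α₁ ≥ ⋯ ≥ α_K ≥ 0` equals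
`inf_x [(2 - (1/2)^(K-1)) I(x) + 2 F(x)]`, and is attained at `α* = (1, 1/2, …, (1/2)^(K-1))`. -/
theorem stmt_8 {X : Type*} [MetricSpace X] [Nonempty X] (K : ℕ) [NeZero K]
    (I : X → ℝ) (hIcont : Continuous I) (hInonneg : ∀ x, 0 ≤ I x)
    (hIcomp : ∀ M : ℝ, IsCompact {x : X | I x ≤ M})
    (F : X → ℝ) (hFcont : Continuous F) (hFbdd : BddBelow (Set.range F))
    (G : (Fin K → ℝ) → ℝ)
    (hG : ∀ α, G α = sInf {v : ℝ | ∃ (x : X) (Iv : Fin K → ℝ), Iv 0 = I x ∧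
        (∀ j, 0 ≤ Iv j ∧ Iv j ≤ Iv 0) ∧
        v = 2 * ∑ j, α j * Iv j + 2 * F x
          - ⨅ σ : Equiv.Perm (Fin K), ∑ j, α j * Iv (σ j)}) :
    IsGreatest (G '' {α : Fin K → ℝ | α 0 = 1 ∧ Antitone α ∧ ∀ j, 0 ≤ α j})
        (⨅ x : X, ((2 - (1/2 : ℝ) ^ (K - 1)) * I x + 2 * F x)) ∧
      G (fun j => (1/2 : ℝ) ^ (j : ℕ))
        = ⨅ x : X, ((2 - (1/2 : ℝ) ^ (K - 1)) * I x + 2 * F x) :=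
  stmt_8_general K I hInonneg F hFbdd G hG
end

section
/- Let $\{X^\varepsilon\}$ satisfy an LDP on a metric space $\mathcal{X}$ with rate function $I$. Let $f_1,\dots,f_N:\mathcal{X}\to\mathbb{R}$ be continuous, let $g_1,g_2$ be lower semi-continuous with $g_r - \min_{\ell} f_\ell$ bounded below for $r=1,2$, and let $B_1,B_2\subset\mathcal{X}$ be closed. Then $\liminf_{\varepsilon\to0}-\varepsilon\log E\Big[\frac{e^{-(g_1(X^\varepsilon)+g_2(X^\varepsilon))/\varepsilon}}{(\sum_{\ell=1}^N e^{-f_\ell(X^\varepsilon)/\varepsilon})^2} 1_{B_1}(X^\varepsilon) 1_{B_2}(X^\varepsilon)\Big] \ge \min_{r\in\{1,2\}} \inf_{x\in B_r}\big[2g_r(x)+I(x)-2\min_{\ell} f_\ell(x)\big]$. -/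
/-!
Since `∑ ℓ, e^{-f ℓ/ε} ≥ e^{-min_ℓ f ℓ/ε}`, the integrand is at most `e^{-φ/ε}` on `B 0 ∩ B 1`,
where `φ = g 0 + g 1 - 2 min_ℓ f ℓ` is lower semicontinuous, bounded below, and at least
`min_r (2 g r - 2 min_ℓ f ℓ)`. So it suffices to prove the Laplace-type bound
`liminf -ε log ∫_C e^{-φ/ε} dμ_ε ≥ inf_C (φ + I)` for closed `C`. Cut the range of `φ` above its
lower bound into finitely many slices of width `δ`: a slice lies in a closed sublevel set
`C ∩ {φ ≤ t}`, whose mass is at most `e^{-(inf I - δ)/ε}` by the LDP upper bound, the region where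
`φ` is large is controlled by `μ_ε(C) ≤ e^{δ/ε}` (as `I ≥ 0`), and the number of slices disappears
under `ε log`.
-/

open Filter MeasureTheory
open scoped ENNReal

/-- Large deviation principle with scaling `ε` for a family of measures `μ ε` as `ε → 0⁺`,
with rate function `I` (extended-nonnegative-valued); `ENNReal.log` takes values in `EReal`
with `log 0 = -∞`. -/
def IsLDP {Y : Type*} [TopologicalSpace Y] [MeasurableSpace Y]
    (μ : ℝ → Measure Y) (I : Y → ℝ≥0∞) : Prop :=
  (∀ G : Set Y, IsOpen G →
      -(⨅ x ∈ G, (I x : EReal)) ≤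
        Filter.liminf (fun ε : ℝ => (ε : EReal) * ENNReal.log (μ ε G))
          (nhdsWithin 0 (Set.Ioi 0))) ∧
  (∀ C : Set Y, IsClosed C →
      Filter.limsup (fun ε : ℝ => (ε : EReal) * ENNReal.log (μ ε C))
        (nhdsWithin 0 (Set.Ioi 0)) ≤ -(⨅ x ∈ C, (I x : EReal)))

open Set Topology

theorem continuous_iInf_of_fintype {α β ι : Type*} [TopologicalSpace α]
    [ConditionallyCompleteLinearOrder β] [TopologicalSpace β] [OrderTopology β]
    [Fintype ι] [Nonempty ι] {f : ι → α → β} (hf : ∀ i, Continuous (f i)) :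
    Continuous fun x => ⨅ i, f i x := by
  simp_rw [← Finset.inf'_univ_eq_ciInf]
  exact Continuous.finset_inf'_apply Finset.univ_nonempty fun i _ => hf i

theorem Real.exp_neg_iInf_div_le_sum_exp {ι : Type*} [Fintype ι] [Nonempty ι] (f : ι → ℝ)
    (ε : ℝ) : Real.exp (-(⨅ i, f i) / ε) ≤ ∑ i, Real.exp (-f i / ε) := by
  obtain ⟨i, hi⟩ := exists_eq_ciInf_of_finite (f := f)
  rw [← hi]
  exact Finset.single_le_sum (f := fun j => Real.exp (-f j / ε)) (fun j _ => (Real.exp_pos _).le)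
    (Finset.mem_univ i)

theorem Real.exp_div_sq_sum_exp_le {ι : Type*} [Fintype ι] [Nonempty ι] (f : ι → ℝ)
    (a ε : ℝ) :
    Real.exp (-a / ε) / (∑ i, Real.exp (-f i / ε)) ^ 2 ≤
      Real.exp (-(a - 2 * ⨅ i, f i) / ε) :=
  calc Real.exp (-a / ε) / (∑ i, Real.exp (-f i / ε)) ^ 2
      ≤ Real.exp (-a / ε) / Real.exp (-(⨅ i, f i) / ε) ^ 2 := by
        gcongr
        exact Real.exp_neg_iInf_div_le_sum_exp f ε
    _ = Real.exp (-(a - 2 * ⨅ i, f i) / ε) := by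
        rw [← Real.exp_nat_mul, ← Real.exp_sub]
        congr 1
        push_cast
        ring

theorem exists_nat_add_mul_le_lt {m δ t : ℝ} (hδ : 0 < δ) (ht : m ≤ t) :
    ∃ k : ℕ, m + k * δ ≤ t ∧ t < m + (k + 1) * δ := by
  refine ⟨⌊(t - m) / δ⌋₊, ?_, ?_⟩
  · have := Nat.floor_le (div_nonneg (sub_nonneg.2 ht) hδ.le)
    rw [le_div_iff₀ hδ] at this
    linarith
  · have := Nat.lt_floor_add_one ((t - m) / δ)
    rw [div_lt_iff₀ hδ] at this
    linarith

theorem ENNReal.le_ofReal_exp_of_mul_log_le {a : ℝ≥0∞} {ε t : ℝ} (hε : 0 < ε)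
    (h : (ε : EReal) * ENNReal.log a ≤ t) : a ≤ ENNReal.ofReal (Real.exp (t / ε)) := by
  have hlog : ENNReal.log a ≤ ((t / ε : ℝ) : EReal) := by
    rw [EReal.coe_div, EReal.le_div_iff_mul_le (by exact_mod_cast hε) (EReal.coe_ne_top ε),
      mul_comm]
    exact h
  rw [← EReal.exp_coe, ← ENNReal.exp_log a]
  exact EReal.exp_monotone hlog

theorem ENNReal.sub_mul_log_le_neg_mul_log {a : ℝ≥0∞} {ε b : ℝ} {N : ℕ} (hε : 0 < ε)
    (h : a ≤ (N + 1) * ENNReal.ofReal (Real.exp (-b / ε))) :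
    ((b - ε * Real.log (N + 1) : ℝ) : EReal) ≤ -((ε : EReal) * ENNReal.log a) := by
  have hpos : 0 < ((N : ℝ) + 1) * Real.exp (-b / ε) := by positivity
  have hlog : ENNReal.log a ≤ ((Real.log (N + 1) - b / ε : ℝ) : EReal) := by
    calc ENNReal.log a ≤ ENNReal.log (ENNReal.ofReal ((N + 1) * Real.exp (-b / ε))) := by
          refine ENNReal.log_monotone (h.trans_eq ?_)
          rw [ENNReal.ofReal_mul (by positivity), ENNReal.ofReal_add (by positivity) zero_le_one,
            ENNReal.ofReal_natCast, ENNReal.ofReal_one]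
      _ = ((Real.log (N + 1) - b / ε : ℝ) : EReal) := by
          rw [ENNReal.log_ofReal_of_pos hpos, Real.log_mul (by positivity) (by positivity),
            Real.log_exp, neg_div, sub_eq_add_neg]
  have := mul_le_mul_of_nonneg_left hlog (by exact_mod_cast hε.le : (0 : EReal) ≤ ε)
  rw [← EReal.coe_mul, mul_sub, mul_div_cancel₀ _ hε.ne'] at this
  rw [← neg_sub, EReal.coe_neg]
  exact EReal.neg_le_neg_iff.2 this

theorem coe_sub_le_iInf_inter_preimage_Iic {X : Type*} {C : Set X} {φ : X → ℝ}
    {I : X → ℝ≥0∞} {b : ℝ} (hb : (b : EReal) ≤ ⨅ x ∈ C, ((φ x : EReal) + (I x : EReal)))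
    (t : ℝ) : ((b - t : ℝ) : EReal) ≤ ⨅ x ∈ C ∩ φ ⁻¹' Iic t, (I x : EReal) := by
  refine le_iInf₂ fun x hx => ?_
  calc ((b - t : ℝ) : EReal) ≤ (b : EReal) - (φ x : EReal) := by
        rw [← EReal.coe_sub]
        exact EReal.coe_le_coe_iff.2 (by linarith [show φ x ≤ t from hx.2])
    _ ≤ I x := EReal.sub_le_of_le_add' (hb.trans (iInf₂_le x hx.1))

def IsLDPUpperBound {Y : Type*} [TopologicalSpace Y] [MeasurableSpace Y]
    (μ : ℝ → Measure Y) (I : Y → ℝ≥0∞) : Prop :=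
  ∀ C : Set Y, IsClosed C →
    limsup (fun ε : ℝ => (ε : EReal) * ENNReal.log (μ ε C)) (𝓝[>] 0) ≤
      -(⨅ x ∈ C, (I x : EReal))

theorem IsLDP.isLDPUpperBound {Y : Type*} [TopologicalSpace Y] [MeasurableSpace Y]
    {μ : ℝ → Measure Y} {I : Y → ℝ≥0∞} (h : IsLDP μ I) : IsLDPUpperBound μ I :=
  h.2

theorem setLIntegral_ofReal_exp_le_of_cover {X κ : Type*} [MeasurableSpace X] (ν : Measure X)
    {C : Set X} {φ : X → ℝ} {ε : ℝ} (hε : 0 ≤ ε) {s : Finset κ} {K : κ → Set X}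
    (hK : ∀ k ∈ s, MeasurableSet (K k)) {lo : κ → ℝ}
    (hcov : ∀ x ∈ C, ∃ k ∈ s, x ∈ K k ∧ lo k ≤ φ x) :
    ∫⁻ x in C, ENNReal.ofReal (Real.exp (-φ x / ε)) ∂ν ≤
      ∑ k ∈ s, ENNReal.ofReal (Real.exp (-lo k / ε)) * ν (K k) := by
  set c : κ → ℝ≥0∞ := fun k => ENNReal.ofReal (Real.exp (-lo k / ε))
  have hmeas : ∀ k ∈ s, Measurable ((K k).indicator fun _ => c k) :=
    fun k hk => measurable_const.indicator (hK k hk)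
  calc ∫⁻ x in C, ENNReal.ofReal (Real.exp (-φ x / ε)) ∂ν
      ≤ ∫⁻ x in C, ∑ k ∈ s, (K k).indicator (fun _ => c k) x ∂ν := by
        refine setLIntegral_mono (Finset.measurable_sum _ hmeas) fun x hx => ?_
        obtain ⟨k, hks, hxk, hlo⟩ := hcov x hx
        refine le_trans ?_ (Finset.single_le_sum (fun _ _ => zero_le) hks)
        rw [indicator_of_mem hxk]
        exact ENNReal.ofReal_le_ofReal (Real.exp_le_exp.2 (by gcongr))
    _ ≤ ∫⁻ x, ∑ k ∈ s, (K k).indicator (fun _ => c k) x ∂ν := setLIntegral_le_lintegral _ _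
    _ = ∑ k ∈ s, c k * ν (K k) := by
        rw [lintegral_finsetSum _ hmeas]
        exact Finset.sum_congr rfl fun k hk => lintegral_indicator_const (hK k hk) _

section LaplaceUpperBound

variable {X : Type*} [TopologicalSpace X] [MeasurableSpace X] {μ : ℝ → Measure X}
  {I : X → ℝ≥0∞}

theorem IsLDPUpperBound.eventually_measure_le (h : IsLDPUpperBound μ I) {C : Set X}
    (hC : IsClosed C) {c : ℝ} (hc : (c : EReal) < ⨅ x ∈ C, (I x : EReal)) :
    ∀ᶠ ε in 𝓝[>] 0, μ ε C ≤ ENNReal.ofReal (Real.exp (-c / ε)) := by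
  have hlt : limsup (fun ε : ℝ => (ε : EReal) * ENNReal.log (μ ε C)) (𝓝[>] 0) <
      ((-c : ℝ) : EReal) :=
    (h C hC).trans_lt (by rwa [EReal.coe_neg, EReal.neg_lt_neg_iff])
  filter_upwards [eventually_lt_of_limsup_lt hlt, self_mem_nhdsWithin] with ε hε hεpos
  exact ENNReal.le_ofReal_exp_of_mul_log_le hεpos hε.le

variable [OpensMeasurableSpace X]

theorem IsLDPUpperBound.le_liminf_of_cover {κ : Type*} (h : IsLDPUpperBound μ I)
    {C : Set X} {φ : X → ℝ} {s : Finset κ} {K : κ → Set X} (hK : ∀ k ∈ s, IsClosed (K k))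
    {lo : κ → ℝ} {b : ℝ} (hcov : ∀ x ∈ C, ∃ k ∈ s, x ∈ K k ∧ lo k ≤ φ x)
    (hI : ∀ k ∈ s, ((b - lo k : ℝ) : EReal) < ⨅ x ∈ K k, (I x : EReal)) :
    (b : EReal) ≤ liminf (fun ε : ℝ => -((ε : EReal) *
      ENNReal.log (∫⁻ x in C, ENNReal.ofReal (Real.exp (-φ x / ε)) ∂(μ ε)))) (𝓝[>] 0) := by
  have hbound : ∀ᶠ ε in 𝓝[>] (0 : ℝ), ∫⁻ x in C, ENNReal.ofReal (Real.exp (-φ x / ε)) ∂(μ ε) ≤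
      (s.card + 1) * ENNReal.ofReal (Real.exp (-b / ε)) := by
    filter_upwards [self_mem_nhdsWithin,
      (eventually_all_finset s).2 fun k hk => h.eventually_measure_le (hK k hk) (hI k hk)]
      with ε hε hμ
    calc ∫⁻ x in C, ENNReal.ofReal (Real.exp (-φ x / ε)) ∂(μ ε)
        ≤ ∑ k ∈ s, ENNReal.ofReal (Real.exp (-lo k / ε)) * μ ε (K k) :=
          setLIntegral_ofReal_exp_le_of_cover _ (le_of_lt hε)
            (fun k hk => (hK k hk).measurableSet) hcov
      _ ≤ ∑ k ∈ s, ENNReal.ofReal (Real.exp (-b / ε)) := by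
          refine Finset.sum_le_sum fun k hk => ?_
          calc ENNReal.ofReal (Real.exp (-lo k / ε)) * μ ε (K k)
              ≤ ENNReal.ofReal (Real.exp (-lo k / ε)) *
                  ENNReal.ofReal (Real.exp (-(b - lo k) / ε)) := by
                gcongr
                exact hμ k hk
            _ = ENNReal.ofReal (Real.exp (-b / ε)) := by
                rw [← ENNReal.ofReal_mul (Real.exp_pos _).le, ← Real.exp_add]
                congr 2
                ring
      _ ≤ (s.card + 1) * ENNReal.ofReal (Real.exp (-b / ε)) := by
          rw [Finset.sum_const, nsmul_eq_mul]
          gcongr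
          exact le_self_add
  have hlog : Tendsto (fun ε : ℝ => ε * Real.log (s.card + 1)) (𝓝[>] 0) (𝓝 0) := by
    simpa using ((continuous_mul_const (Real.log (s.card + 1))).tendsto 0).mono_left
      nhdsWithin_le_nhds
  refine EReal.ge_of_forall_gt_iff_ge.1 fun b₀ hb₀ => le_liminf_of_le (by isBoundedDefault) ?_
  have hb₀' : 0 < b - b₀ := sub_pos.2 (by exact_mod_cast hb₀)
  filter_upwards [hbound, hlog.eventually (gt_mem_nhds hb₀'), self_mem_nhdsWithin]
    with ε hJ hsmall hε
  calc (b₀ : EReal) ≤ ((b - ε * Real.log (s.card + 1) : ℝ) : EReal) := by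
        exact EReal.coe_le_coe_iff.2 (by linarith)
    _ ≤ _ := ENNReal.sub_mul_log_le_neg_mul_log hε hJ

theorem IsLDPUpperBound.iInf_add_le_liminf (h : IsLDPUpperBound μ I) {C : Set X}
    (hC : IsClosed C) {φ : X → ℝ} (hφ : LowerSemicontinuous φ) {m : ℝ}
    (hm : ∀ x ∈ C, m ≤ φ x) :
    ⨅ x ∈ C, ((φ x : EReal) + (I x : EReal)) ≤
      liminf (fun ε : ℝ => -((ε : EReal) *
        ENNReal.log (∫⁻ x in C, ENNReal.ofReal (Real.exp (-φ x / ε)) ∂(μ ε)))) (𝓝[>] 0) := by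
  refine EReal.ge_of_forall_gt_iff_ge.1 fun b hb => ?_
  obtain ⟨b', hbb', hb'⟩ := EReal.exists_between_coe_real hb
  have hbb'r : b < b' := by exact_mod_cast hbb'
  set δ := (b' - b) / 2 with hδ_def
  have hδ : 0 < δ := by linarith
  set a : ℕ → ℝ := fun k => m + k * δ
  have ha_mono : Monotone a := fun i j hij => by
    simp only [a]
    gcongr
  obtain ⟨n, hn⟩ : ∃ n : ℕ, b' ≤ a n := by
    obtain ⟨n, hn⟩ := exists_nat_ge ((b' - m) / δ)
    exact ⟨n, by rw [div_le_iff₀ hδ] at hn; simp only [a]; linarith⟩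
  refine h.le_liminf_of_cover (s := Finset.range (n + 1)) (lo := a)
    (K := fun k => if k < n then C ∩ φ ⁻¹' Iic (a (k + 1)) else C) ?_ ?_ ?_
  · intro k _
    split_ifs
    exacts [hC.inter (hφ.isClosed_preimage _), hC]
  · intro x hx
    by_cases hxn : a n ≤ φ x
    · exact ⟨n, Finset.self_mem_range_succ n, by simp [hx], hxn⟩
    obtain ⟨k, hk, hk'⟩ := exists_nat_add_mul_le_lt hδ (hm x hx)
    have hkn : k < n := by
      by_contra! hnk
      exact hxn ((ha_mono hnk).trans hk)
    refine ⟨k, Finset.mem_range.2 (by omega), ?_, hk⟩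
    rw [if_pos hkn]
    exact ⟨hx, show φ x ≤ m + ((k + 1 : ℕ) : ℝ) * δ by push_cast; linarith⟩
  · intro k hk
    split_ifs with hkn
    · refine lt_of_lt_of_le ?_ (coe_sub_le_iInf_inter_preimage_Iic hb'.le _)
      exact EReal.coe_lt_coe_iff.2 (by simp only [a]; push_cast; linarith)
    · have hnk : n ≤ k := not_lt.1 hkn
      have : b - a k < 0 := by linarith [ha_mono hnk]
      exact (EReal.coe_lt_coe_iff.2 this).trans_le
        (le_iInf₂ fun x _ => EReal.coe_ennreal_nonneg _)

end LaplaceUpperBound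

theorem stmt_13_general {X : Type*} [MetricSpace X] [MeasurableSpace X] [BorelSpace X]
    {ι : Type*} [Fintype ι] [Nonempty ι]
    (μ : ℝ → Measure X)
    (I : X → ℝ≥0∞) (hLDP : IsLDP μ I)
    (f : ι → X → ℝ) (hf : ∀ ℓ, Continuous (f ℓ))
    (g : Fin 2 → X → ℝ) (hg : ∀ r, LowerSemicontinuous (g r))
    (hbdd : ∀ r, BddBelow (Set.range fun x => g r x - ⨅ ℓ, f ℓ x))
    (B : Fin 2 → Set X) (hB : ∀ r, IsClosed (B r)) :
    min
        (⨅ x ∈ B 0, (((2 * g 0 x - 2 * ⨅ ℓ, f ℓ x : ℝ) : EReal) + (I x : EReal)))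
        (⨅ x ∈ B 1, (((2 * g 1 x - 2 * ⨅ ℓ, f ℓ x : ℝ) : EReal) + (I x : EReal))) ≤
      Filter.liminf
        (fun ε : ℝ => -((ε : EReal) *
          ENNReal.log (∫⁻ x in B 0 ∩ B 1,
            ENNReal.ofReal (Real.exp (-(g 0 x + g 1 x) / ε) /
              (∑ ℓ, Real.exp (-f ℓ x / ε)) ^ 2) ∂(μ ε))))
        (nhdsWithin 0 (Set.Ioi 0)) := by
  set φ : X → ℝ := fun x => g 0 x + g 1 x - 2 * ⨅ ℓ, f ℓ x
  have hφ : LowerSemicontinuous φ := by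
    have hc : Continuous fun x => -(2 * ⨅ ℓ, f ℓ x) :=
      ((continuous_iInf_of_fintype hf).const_mul 2).neg
    simpa only [φ, sub_eq_add_neg] using ((hg 0).add (hg 1)).add hc.lowerSemicontinuous
  obtain ⟨m₀, hm₀⟩ := hbdd 0
  obtain ⟨m₁, hm₁⟩ := hbdd 1
  have hm : ∀ x ∈ B 0 ∩ B 1, m₀ + m₁ ≤ φ x := fun x _ => by
    linarith [hm₀ ⟨x, rfl⟩, hm₁ ⟨x, rfl⟩]
  calc _ ≤ ⨅ x ∈ B 0 ∩ B 1, ((φ x : EReal) + (I x : EReal)) := by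
        refine le_iInf₂ fun x hx => (min_le_min (iInf₂_le x hx.1) (iInf₂_le x hx.2)).trans ?_
        rw [min_add_add_right]
        gcongr
        rw [min_le_iff]
        rcases le_total (g 0 x) (g 1 x) with h01 | h01
        · exact Or.inl (EReal.coe_le_coe_iff.2 (by linarith))
        · exact Or.inr (EReal.coe_le_coe_iff.2 (by linarith))
    _ ≤ _ := hLDP.isLDPUpperBound.iInf_add_le_liminf ((hB 0).inter (hB 1)) hφ hm
    _ ≤ _ := by
        refine liminf_le_liminf ?_
        filter_upwards [self_mem_nhdsWithin] with ε hε
        refine EReal.neg_le_neg_iff.2 (mul_le_mul_of_nonneg_left (ENNReal.log_monotone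
          (lintegral_mono fun x => ENNReal.ofReal_le_ofReal ?_)) (by exact_mod_cast le_of_lt hε))
        exact Real.exp_div_sq_sum_exp_le (fun ℓ => f ℓ x) _ ε

/-- Part 2 of Lemma 1: lower bound for ratio functionals. With `f_ℓ` continuous,
`g_1, g_2` lower semicontinuous with `g_r - min_ℓ f_ℓ` bounded below, and `B_1, B_2` closed,
`liminf -ε log E[ e^{-(g₁+g₂)/ε} / (∑_ℓ e^{-f_ℓ/ε})² ⋅ 1_{B₁} 1_{B₂} ]
  ≥ min_r inf_{x ∈ B_r} [2 g_r(x) + I(x) - 2 min_ℓ f_ℓ(x)]`. -/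
theorem stmt_13 {X : Type*} [MetricSpace X] [MeasurableSpace X] [BorelSpace X]
    {ι : Type*} [Fintype ι] [Nonempty ι]
    (μ : ℝ → Measure X) (hprob : ∀ ε > (0 : ℝ), IsProbabilityMeasure (μ ε))
    (I : X → ℝ≥0∞) (hLDP : IsLDP μ I)
    (f : ι → X → ℝ) (hf : ∀ ℓ, Continuous (f ℓ))
    (g : Fin 2 → X → ℝ) (hg : ∀ r, LowerSemicontinuous (g r))
    (hbdd : ∀ r, BddBelow (Set.range fun x => g r x - ⨅ ℓ, f ℓ x))
    (B : Fin 2 → Set X) (hB : ∀ r, IsClosed (B r)) :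
    min
        (⨅ x ∈ B 0, (((2 * g 0 x - 2 * ⨅ ℓ, f ℓ x : ℝ) : EReal) + (I x : EReal)))
        (⨅ x ∈ B 1, (((2 * g 1 x - 2 * ⨅ ℓ, f ℓ x : ℝ) : EReal) + (I x : EReal))) ≤
      Filter.liminf
        (fun ε : ℝ => -((ε : EReal) *
          ENNReal.log (∫⁻ x in B 0 ∩ B 1,
            ENNReal.ofReal (Real.exp (-(g 0 x + g 1 x) / ε) /
              (∑ ℓ, Real.exp (-f ℓ x / ε)) ^ 2) ∂(μ ε))))
        (nhdsWithin 0 (Set.Ioi 0)) :=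
  stmt_13_general μ I hLDP f hf g hg hbdd B hB
end

section
/- Assume $\mu^\varepsilon(dx) = \frac{1}{Z^\varepsilon} e^{-I(x)/\varepsilon}\gamma(dx)$ on a Polish space $\mathcal{X}$, with $I:\mathcal{X}\to[0,\infty]$ measurable and $Z^\varepsilon\in(0,\infty)$. Fix $K\ge 1$ and $1=\alpha_1\ge\cdots\ge\alpha_K\ge 0$, let $X_1^\varepsilon,\dots,X_K^\varepsilon$ be independent with $X_j^\varepsilon\sim\mu^{\varepsilon/\alpha_j}$, define the weights $\rho^\varepsilon(\mathbf{x}) = e^{-\frac{1}{\varepsilon}\sum_j \alpha_j I(x_j)}/\sum_{\tau\in\Sigma_K} e^{-\frac{1}{\varepsilon}\sum_j \alpha_j I(x_{\tau(j)})}$, and for a measurable $F:\mathcal{X}\to\mathbb{R}$ bounded below set $\hat\eta^\varepsilon = \sum_{\sigma\in\Sigma_K}\rho^\varepsilon(\mathbf{X}^\varepsilon_\sigma) e^{-F(X^\varepsilon_{\sigma(1)})/\varepsilon}$. Then $E[\hat\eta^\varepsilon] = \int_{\mathcal{X}} e^{-F(x)/\varepsilon}\mu^\varepsilon(dx)$,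 i.e., the INS estimator is unbiased. -/
/-!
If `x ∼ ⊗ⱼ μⱼ` has density `G` with respect to `γ^K`, then `x ∘ σ` has density `G ∘ σ⁻¹`.
Summing the estimator over `σ` therefore integrates `ρ(y) e^{-F(y₀)/ε}` against the symmetrized
density `∑_σ G(y ∘ σ)`, and `ρ` is exactly the self-normalized weight that turns the symmetrized
density back into `G`. The expectation is thus `∫ e^{-F(y₀)/ε} d(⊗ⱼ μⱼ)(y) = ∫ e^{-F/ε} dμ₀`,
the `μⱼ` being probability measures.
-/

open MeasureTheory Finset
open scoped ENNReal

noncomputable def negExp (t : ℝ≥0∞) : ℝ≥0∞ :=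
  if t = ⊤ then 0 else ENNReal.ofReal (Real.exp (-t.toReal))

theorem negExp_ne_top (t : ℝ≥0∞) : negExp t ≠ ⊤ := by
  unfold negExp; split <;> simp

@[fun_prop]
theorem measurable_negExp : Measurable negExp :=
  Measurable.ite (measurableSet_singleton ⊤) measurable_const (by fun_prop)

theorem negExp_add (s t : ℝ≥0∞) : negExp (s + t) = negExp s * negExp t := by
  rcases eq_or_ne s ⊤ with rfl | hs
  · simp [negExp]
  rcases eq_or_ne t ⊤ with rfl | ht
  · simp [negExp]
  simp only [negExp, ENNReal.add_eq_top, hs, ht, or_self, if_false,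
    ENNReal.toReal_add hs ht, neg_add, Real.exp_add, ENNReal.ofReal_mul (Real.exp_nonneg _)]

theorem negExp_sum {ι : Type*} (s : Finset ι) (f : ι → ℝ≥0∞) :
    negExp (∑ i ∈ s, f i) = ∏ i ∈ s, negExp (f i) := by
  induction s using Finset.cons_induction with
  | empty => simp [negExp]
  | cons a s ha ih => rw [sum_cons, prod_cons, negExp_add, ih]

theorem lintegral_fin_nat_prod_eq_prod {n : ℕ} {E : Fin n → Type*}
    {mE : ∀ i, MeasurableSpace (E i)} (μ : (i : Fin n) → Measure (E i)) [∀ i, SigmaFinite (μ i)]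
    {f : (i : Fin n) → E i → ℝ≥0∞} (hf : ∀ i, Measurable (f i)) :
    ∫⁻ x, ∏ i, f i (x i) ∂Measure.pi μ = ∏ i, ∫⁻ x, f i x ∂μ i := by
  induction n with
  | zero => simp
  | succ n ih =>
      have hsplit := (measurePreserving_piFinSuccAbove μ 0).lintegral_comp_emb
        (MeasurableEquiv.measurableEmbedding _)
        (fun p => f 0 p.1 * ∏ j, f (Fin.succAbove 0 j) (p.2 j))
      simp_rw [Fin.prod_univ_succAbove _ 0]
      have hrest : Measurable fun y : (j : Fin n) → E (Fin.succAbove 0 j) =>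
          ∏ j, f (Fin.succAbove 0 j) (y j) :=
        Finset.measurable_prod _ fun j _ => (hf _).comp (measurable_pi_apply j)
      rw [← ih _ fun j => hf _, ← lintegral_prod_mul (hf 0).aemeasurable hrest.aemeasurable]
      exact hsplit

theorem lintegral_fintype_prod_eq_prod {ι : Type*} [Fintype ι] {E : ι → Type*}
    {mE : ∀ i, MeasurableSpace (E i)} (μ : (i : ι) → Measure (E i)) [∀ i, SigmaFinite (μ i)]
    {f : (i : ι) → E i → ℝ≥0∞} (hf : ∀ i, Measurable (f i)) :
    ∫⁻ x, ∏ i, f i (x i) ∂Measure.pi μ = ∏ i, ∫⁻ x, f i x ∂μ i := by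
  let e := (Fintype.equivFin ι).symm
  rw [← (measurePreserving_piCongrLeft _ e).lintegral_comp_emb
    (MeasurableEquiv.measurableEmbedding _)]
  simp_rw [← e.prod_comp, MeasurableEquiv.coe_piCongrLeft, Equiv.piCongrLeft_apply_apply]
  exact lintegral_fin_nat_prod_eq_prod _ fun i => hf (e i)

theorem MeasureTheory.Measure.pi_eq_withDensity {ι : Type*} [Fintype ι] {E : ι → Type*}
    {mE : ∀ i, MeasurableSpace (E i)} (μ : (i : ι) → Measure (E i)) [∀ i, SigmaFinite (μ i)]
    {f : (i : ι) → E i → ℝ≥0∞} (hf : ∀ i, Measurable (f i))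
    (ν : (i : ι) → Measure (E i)) [∀ i, SigmaFinite (ν i)]
    (hν : ∀ i, ν i = (μ i).withDensity (f i)) :
    Measure.pi ν = (Measure.pi μ).withDensity fun x => ∏ i, f i (x i) := by
  refine Measure.pi_eq fun s hs => ?_
  have hind : (Set.univ.pi s).indicator (fun x => ∏ i, f i (x i))
      = fun x => ∏ i, (s i).indicator (f i) (x i) := by
    ext x
    by_cases hx : x ∈ Set.univ.pi s
    · rw [Set.indicator_of_mem hx]
      exact prod_congr rfl fun i _ => (Set.indicator_of_mem (hx i trivial) _).symm
    · obtain ⟨i, hi⟩ : ∃ i, x i ∉ s i := by simpa [Set.mem_univ_pi] using hx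
      rw [Set.indicator_of_notMem hx]
      exact (prod_eq_zero (mem_univ i) (Set.indicator_of_notMem hi _)).symm
  rw [withDensity_apply _ (MeasurableSet.univ_pi hs), ← lintegral_indicator
    (MeasurableSet.univ_pi hs), hind,
    lintegral_fintype_prod_eq_prod _ fun i => (hf i).indicator (hs i)]
  simp_rw [hν, withDensity_apply _ (hs _), lintegral_indicator (hs _)]

section PermWeight

variable {ι α : Type*} [Fintype ι] [DecidableEq ι] (N : (ι → α) → ℝ≥0∞) (y : ι → α)

/-- The paper's weight `ρ^ε` when `N x = e^{-∑ⱼ αⱼ I(xⱼ)/ε}`. -/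
noncomputable def permWeight : ℝ≥0∞ := N y / ∑ σ : Equiv.Perm ι, N (y ∘ σ)

theorem le_sum_perm_comp : N y ≤ ∑ σ : Equiv.Perm ι, N (y ∘ σ) :=
  single_le_sum (f := fun σ : Equiv.Perm ι => N (y ∘ σ)) (fun _ _ => zero_le) (mem_univ 1)

theorem permWeight_ne_top : permWeight N y ≠ ⊤ :=
  (ENNReal.div_le_of_le_mul (by rw [one_mul]; exact le_sum_perm_comp N y)).trans_lt
    ENNReal.one_lt_top |>.ne

theorem sum_perm_comp_mul_permWeight (hN : ∀ σ : Equiv.Perm ι, N (y ∘ σ) ≠ ⊤) :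
    (∑ σ : Equiv.Perm ι, N (y ∘ σ)) * permWeight N y = N y :=
  ENNReal.mul_div_cancel' (fun h => le_antisymm (h ▸ le_sum_perm_comp N y) zero_le)
    fun h => absurd h (ENNReal.sum_ne_top.2 fun σ _ => hN σ)

@[fun_prop]
theorem measurable_permWeight [MeasurableSpace α] {N : (ι → α) → ℝ≥0∞} (hN : Measurable N) :
    Measurable (permWeight N) :=
  hN.div (Finset.measurable_sum _ fun σ _ =>
    hN.comp (measurable_pi_lambda _ fun j => measurable_pi_apply (σ j)))

end PermWeight

section Symmetrization

variable {ι X : Type*} [Fintype ι] [MeasurableSpace X] (γ : Measure X) [SigmaFinite γ]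

theorem lintegral_comp_perm (σ : Equiv.Perm ι) (φ : (ι → X) → ℝ≥0∞) :
    ∫⁻ x, φ (x ∘ σ) ∂Measure.pi (fun _ => γ) = ∫⁻ x, φ x ∂Measure.pi (fun _ => γ) :=
  (measurePreserving_arrowCongr' (fun _ => γ) (fun _ => γ) σ⁻¹ (MeasurableEquiv.refl X)
    fun _ => MeasurePreserving.id γ).lintegral_comp_emb (MeasurableEquiv.measurableEmbedding _) φ

theorem lintegral_sum_perm_withDensity [DecidableEq ι] {G r φ : (ι → X) → ℝ≥0∞}
    (hG : Measurable G) (hr : Measurable r) (hφ : Measurable φ)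
    (hGr : ∀ y, (∑ σ : Equiv.Perm ι, G (y ∘ σ)) * r y = G y) :
    ∫⁻ x, ∑ σ : Equiv.Perm ι, r (x ∘ σ) * φ (x ∘ σ) ∂(Measure.pi fun _ => γ).withDensity G
      = ∫⁻ x, φ x ∂(Measure.pi fun _ => γ).withDensity G := by
  rw [lintegral_withDensity_eq_lintegral_mul _ hG (by fun_prop),
    lintegral_withDensity_eq_lintegral_mul _ hG hφ]
  calc ∫⁻ x, G x * ∑ σ : Equiv.Perm ι, r (x ∘ σ) * φ (x ∘ σ) ∂(Measure.pi fun _ => γ)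
      = ∑ σ : Equiv.Perm ι, ∫⁻ x, G x * (r (x ∘ σ) * φ (x ∘ σ)) ∂(Measure.pi fun _ => γ) := by
        simp_rw [Finset.mul_sum]
        exact lintegral_finsetSum _ fun σ _ => by fun_prop
    _ = ∑ σ : Equiv.Perm ι, ∫⁻ y, G (y ∘ ⇑σ⁻¹) * (r y * φ y) ∂(Measure.pi fun _ => γ) := by
        refine Finset.sum_congr rfl fun σ _ => ?_
        rw [← lintegral_comp_perm γ σ (fun y => G (y ∘ ⇑σ⁻¹) * (r y * φ y))]
        simp only [Function.comp_assoc, ← Equiv.Perm.coe_mul, mul_inv_cancel, Equiv.Perm.coe_one,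
          Function.comp_id]
    _ = ∫⁻ y, (∑ σ : Equiv.Perm ι, G (y ∘ σ)) * r y * φ y ∂(Measure.pi fun _ => γ) := by
        rw [← lintegral_finsetSum (f := fun (σ : Equiv.Perm ι) y => G (y ∘ ⇑σ⁻¹) * (r y * φ y)) _
          fun σ _ => by fun_prop]
        simp_rw [← Finset.sum_mul, mul_assoc]
        congr! 3 with y
        exact Equiv.sum_comp (Equiv.inv (Equiv.Perm ι)) fun σ => G (y ∘ σ)
    _ = ∫⁻ y, G y * φ y ∂(Measure.pi fun _ => γ) := by simp_rw [hGr]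

theorem lintegral_sum_perm_permWeight_mul [DecidableEq ι] {g : ι → X → ℝ≥0∞}
    (hg : ∀ i, Measurable (g i)) (hg_top : ∀ i x, g i x ≠ ⊤) (c : ι → ℝ≥0∞)
    (μ : ι → Measure X) [∀ i, SigmaFinite (μ i)] (hμ : ∀ i, μ i = c i • γ.withDensity (g i))
    {φ : (ι → X) → ℝ≥0∞} (hφ : Measurable φ) :
    ∫⁻ x, ∑ σ : Equiv.Perm ι, permWeight (fun y => ∏ i, g i (y i)) (x ∘ σ) * φ (x ∘ σ)
        ∂Measure.pi μ = ∫⁻ x, φ x ∂Measure.pi μ := by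
  set N : (ι → X) → ℝ≥0∞ := fun y => ∏ i, g i (y i)
  have hpi : Measure.pi μ = (Measure.pi fun _ => γ).withDensity fun y => (∏ i, c i) * N y := by
    rw [Measure.pi_eq_withDensity _ (fun i => (hg i).const_mul (c i)) μ fun i => by
      rw [hμ i, ← withDensity_smul _ (hg i)]; rfl]
    simp_rw [N, prod_mul_distrib]
  rw [hpi]
  refine lintegral_sum_perm_withDensity γ (by fun_prop) (by fun_prop) hφ fun y => ?_
  rw [← mul_sum, mul_assoc, sum_perm_comp_mul_permWeight N y fun σ =>
    ENNReal.prod_ne_top fun i _ => hg_top _ _]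

end Symmetrization

theorem isProbabilityMeasure_inv_lintegral_smul_withDensity {α : Type*} [MeasurableSpace α]
    (γ : Measure α) {f : α → ℝ≥0∞} (h0 : ∫⁻ x, f x ∂γ ≠ 0) (htop : ∫⁻ x, f x ∂γ ≠ ⊤) :
    IsProbabilityMeasure ((∫⁻ x, f x ∂γ)⁻¹ • γ.withDensity f) :=
  ⟨by rw [Measure.smul_apply, withDensity_apply _ .univ, Measure.restrict_univ, smul_eq_mul,
    ENNReal.inv_mul_cancel h0 htop]⟩

theorem integral_eq_integral_of_lintegral_ofReal_eq {α β : Type*} [MeasurableSpace α]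
    [MeasurableSpace β] {μ : Measure α} {ν : Measure β} {f : α → ℝ} {g : β → ℝ}
    (hf₀ : ∀ x, 0 ≤ f x) (hg₀ : ∀ x, 0 ≤ g x) (hf : Measurable f) (hg : Measurable g)
    (h : ∫⁻ x, ENNReal.ofReal (f x) ∂μ = ∫⁻ x, ENNReal.ofReal (g x) ∂ν) :
    ∫ x, f x ∂μ = ∫ x, g x ∂ν := by
  rw [integral_eq_lintegral_of_nonneg_ae (.of_forall hf₀) hf.aestronglyMeasurable,
    integral_eq_lintegral_of_nonneg_ae (.of_forall hg₀) hg.aestronglyMeasurable, h]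

theorem stmt_15_general {X : Type*}
    [MeasurableSpace X]
    (γ : Measure X) [SigmaFinite γ]
    (I : X → ℝ≥0∞) (hI : Measurable I)
    (K : ℕ) [NeZero K] (α : Fin K → ℝ)
    (ε : ℝ)
    (nexp : ℝ≥0∞ → ℝ≥0∞)
    (hnexp : ∀ t, nexp t = if t = ⊤ then 0 else ENNReal.ofReal (Real.exp (-t.toReal)))
    (Z : Fin K → ℝ≥0∞)
    (hZ : ∀ j, Z j = ∫⁻ x, nexp (ENNReal.ofReal (α j) * I x / ENNReal.ofReal ε) ∂γ)
    (hZpos : ∀ j, 0 < Z j) (hZfin : ∀ j, Z j ≠ ⊤)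
    (μ : Fin K → Measure X)
    (hμ : ∀ j, μ j = (Z j)⁻¹ •
      γ.withDensity (fun x => nexp (ENNReal.ofReal (α j) * I x / ENNReal.ofReal ε)))
    (F : X → ℝ) (hF : Measurable F)
    (ρ : (Fin K → X) → ℝ)
    (hρ : ∀ x, ρ x =
      (nexp (∑ j, ENNReal.ofReal (α j) * I (x j) / ENNReal.ofReal ε)).toReal /
        ∑ τ : Equiv.Perm (Fin K),
          (nexp (∑ j, ENNReal.ofReal (α j) * I (x (τ j)) / ENNReal.ofReal ε)).toReal) :
    ∫ x, (∑ σ : Equiv.Perm (Fin K), ρ (fun j => x (σ j)) * Real.exp (-F (x (σ 0)) / ε))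
        ∂(Measure.pi μ)
      = ∫ x, Real.exp (-F x / ε) ∂(μ 0) := by
  obtain rfl : nexp = negExp := funext hnexp
  set g : Fin K → X → ℝ≥0∞ := fun j x => negExp (ENNReal.ofReal (α j) * I x / ENNReal.ofReal ε)
  have hprob : ∀ j, IsProbabilityMeasure (μ j) := fun j => by
    rw [hμ j, hZ j]
    exact isProbabilityMeasure_inv_lintegral_smul_withDensity γ (hZ j ▸ (hZpos j).ne')
      (hZ j ▸ hZfin j)
  set N : (Fin K → X) → ℝ≥0∞ := fun y => ∏ j, g j (y j)
  obtain rfl : ρ = fun y => (permWeight N y).toReal := funext fun y => by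
    rw [hρ y, permWeight, ENNReal.toReal_div,
      ENNReal.toReal_sum fun σ _ => ENNReal.prod_ne_top fun j _ => negExp_ne_top _]
    simp only [N, g, negExp_sum, Function.comp_apply]
  set E : X → ℝ≥0∞ := fun x => ENNReal.ofReal (Real.exp (-F x / ε))
  refine integral_eq_integral_of_lintegral_ofReal_eq (fun x => by positivity)
    (fun x => by positivity) (by fun_prop) (by fun_prop) ?_
  calc ∫⁻ x, ENNReal.ofReal (∑ σ : Equiv.Perm (Fin K),
          (permWeight N fun j => x (σ j)).toReal * Real.exp (-F (x (σ 0)) / ε)) ∂Measure.pi μ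
      = ∫⁻ x, ∑ σ : Equiv.Perm (Fin K), permWeight N (x ∘ σ) * E ((x ∘ σ) 0)
          ∂Measure.pi μ := lintegral_congr fun x => by
        rw [ENNReal.ofReal_sum_of_nonneg fun σ _ => by positivity]
        refine sum_congr rfl fun σ _ => ?_
        rw [ENNReal.ofReal_mul ENNReal.toReal_nonneg, ENNReal.ofReal_toReal (permWeight_ne_top _ _)]
        rfl
    _ = ∫⁻ x, E (x 0) ∂Measure.pi μ :=
        lintegral_sum_perm_permWeight_mul γ (fun j => by fun_prop) (fun j x => negExp_ne_top _)
          (fun j => (Z j)⁻¹) μ hμ (φ := fun y => E (y 0)) (by fun_prop)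
    _ = ∫⁻ x, E x ∂μ 0 := (measurePreserving_eval μ 0).lintegral_comp (by fun_prop)

/-- The INS estimator is unbiased: with `μ^{ε/α_j}(dx) = (1/Z^{ε/α_j}) e^{-α_j I(x)/ε} γ(dx)`,
independent samples `X_j ∼ μ^{ε/α_j}`, weights
`ρ^ε(x) = e^{-∑ α_j I(x_j)/ε} / ∑_τ e^{-∑ α_j I(x_{τ(j)})/ε}` and
`η̂^ε = ∑_σ ρ^ε(X_σ) e^{-F(X_{σ(1)})/ε}`, one has `E η̂^ε = ∫ e^{-F/ε} dμ^ε`.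
Here `nexp t = e^{-t}` for `t ∈ [0,∞]` (with `e^{-∞} = 0`). -/
theorem stmt_15 {X : Type*} [MetricSpace X] [CompleteSpace X] [SecondCountableTopology X]
    [MeasurableSpace X] [BorelSpace X]
    (γ : Measure X) [SigmaFinite γ]
    (I : X → ℝ≥0∞) (hI : Measurable I)
    (K : ℕ) [NeZero K] (α : Fin K → ℝ) (hα1 : α 0 = 1) (hαanti : Antitone α)
    (hαnonneg : ∀ j, 0 ≤ α j)
    (ε : ℝ) (hε : 0 < ε)
    (nexp : ℝ≥0∞ → ℝ≥0∞)
    (hnexp : ∀ t, nexp t = if t = ⊤ then 0 else ENNReal.ofReal (Real.exp (-t.toReal)))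
    (Z : Fin K → ℝ≥0∞)
    (hZ : ∀ j, Z j = ∫⁻ x, nexp (ENNReal.ofReal (α j) * I x / ENNReal.ofReal ε) ∂γ)
    (hZpos : ∀ j, 0 < Z j) (hZfin : ∀ j, Z j ≠ ⊤)
    (μ : Fin K → Measure X) [∀ j, SigmaFinite (μ j)]
    (hμ : ∀ j, μ j = (Z j)⁻¹ •
      γ.withDensity (fun x => nexp (ENNReal.ofReal (α j) * I x / ENNReal.ofReal ε)))
    (F : X → ℝ) (hF : Measurable F) (hFbdd : BddBelow (Set.range F))
    (ρ : (Fin K → X) → ℝ)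
    (hρ : ∀ x, ρ x =
      (nexp (∑ j, ENNReal.ofReal (α j) * I (x j) / ENNReal.ofReal ε)).toReal /
        ∑ τ : Equiv.Perm (Fin K),
          (nexp (∑ j, ENNReal.ofReal (α j) * I (x (τ j)) / ENNReal.ofReal ε)).toReal) :
    ∫ x, (∑ σ : Equiv.Perm (Fin K), ρ (fun j => x (σ j)) * Real.exp (-F (x (σ 0)) / ε))
        ∂(Measure.pi μ)
      = ∫ x, Real.exp (-F x / ε) ∂(μ 0) :=
  stmt_15_general γ I hI K α ε nexp hnexp Z hZ hZpos hZfin μ hμ F hF ρ hρ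
end
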